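/- arXiv:2312.03553 — 2 statements merged into one kernel-verified Lean document; each statement's English description precedes it below -/
import Mathlib

section
/- Let f : [0,∞) → [0,∞) be Lipschitz continuous and suppose there are constants C₀, C₁ > 0, exponents α, β, γ with 0 ≤ β < α, γ ≥ 0 and α + β < 2, such that f'(t) ≤ C₀(1+t)^{-α} (wherever f is differentiable) and ∫₀ᵗ f(s) ds ≤ C₁(1+t)^{β} ln^{γ}(1+t) for all t ≥ 0. Then for all sufficiently large t, f(t) ≤ 2√(C₀C₁) (1+t)^{(β-α)/2} ln^{γ/2}(1+t). -/
/-!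
Lipschitz functions are absolutely continuous, hence integrals of their derivatives, so
`f(t) - f(s) ≤ c (t - s)` as soon as `f' ≤ c` at the points of `(s, t)` where `f` is
differentiable. For `h ≤ (1 - 2^{-1/α})(1 + t)` we have `(1 + s)^{-α} ≤ 2 (1 + t)^{-α}` on
`[t - h, t]`, so there `f` stays above the line `f(t) - 2A(t - s)`, `A = C₀(1+t)^{-α}`.
Integrating, `h f(t) ≤ B + A h²` with `B = C₁(1+t)^β ln^γ(1+t)`, and the optimal choice
`h = f(t)/(2A)` yields `f(t)² ≤ 4AB`. Because `α + β < 2`, `B = o(A (1+t)²)`, which for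
large `t` makes this choice of `h` admissible.
-/

open MeasureTheory Real Filter Set

theorem AbsolutelyContinuousOnInterval.sub_le_mul_sub_of_hasDerivAt_le {f : ℝ → ℝ}
    {a b c : ℝ} (hf : AbsolutelyContinuousOnInterval f a b) (hab : a ≤ b) (hc : 0 ≤ c)
    (hf' : ∀ x ∈ Ioo a b, ∀ d, HasDerivAt f d x → d ≤ c) :
    f b - f a ≤ c * (b - a) := by
  -- `deriv f = 0` where `f` is not differentiable, hence the assumption `0 ≤ c`.
  have hderiv_le : ∀ x ∈ Ioo a b, deriv f x ≤ c := fun x hx => by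
    by_cases hdiff : DifferentiableAt ℝ f x
    · exact hf' x hx _ hdiff.hasDerivAt
    · rw [deriv_zero_of_not_differentiableAt hdiff]
      exact hc
  calc f b - f a = ∫ x in a..b, deriv f x := hf.integral_deriv_eq_sub.symm
    _ ≤ ∫ _ in a..b, c := intervalIntegral.integral_mono_on_of_le_Ioo hab
        hf.intervalIntegrable_deriv intervalIntegrable_const hderiv_le
    _ = c * (b - a) := by simp [mul_comm]

theorem AbsolutelyContinuousOnInterval.mul_sub_le_integral_of_hasDerivAt_le {f : ℝ → ℝ}
    {a b c : ℝ} (hf : AbsolutelyContinuousOnInterval f a b) (hab : a ≤ b) (hc : 0 ≤ c)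
    (hf' : ∀ x ∈ Ioo a b, ∀ d, HasDerivAt f d x → d ≤ c) :
    (b - a) * f b - c * (b - a) ^ 2 / 2 ≤ ∫ x in a..b, f x := by
  have hlower : ∀ x ∈ Icc a b, f b - c * (b - x) ≤ f x := fun x hx => by
    have hsub : uIcc x b ⊆ uIcc a b :=
      uIcc_subset_uIcc (by simp [uIcc_of_le hab, hx.1, hx.2]) (by simp [hab])
    have := (hf.mono hsub).sub_le_mul_sub_of_hasDerivAt_le hx.2 hc
      fun y hy => hf' y ⟨hx.1.trans_lt hy.1, hy.2⟩
    linarith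
  calc (b - a) * f b - c * (b - a) ^ 2 / 2 = ∫ x in a..b, (f b - c * (b - x)) := by
        rw [intervalIntegral.integral_sub intervalIntegrable_const
          (Continuous.intervalIntegrable (by fun_prop) _ _), intervalIntegral.integral_const_mul,
          intervalIntegral.integral_comp_sub_left (fun x => x), integral_id]
        simp only [intervalIntegral.integral_const, smul_eq_mul, sub_self]
        ring
    _ ≤ ∫ x in a..b, f x := intervalIntegral.integral_mono_on hab
        (Continuous.intervalIntegrable (by fun_prop) _ _) hf.continuousOn.intervalIntegrable hlower

theorem le_two_mul_sqrt_of_forall_mul_le_add_mul_sq {y A B H : ℝ} (hy : 0 ≤ y) (hA : 0 < A)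
    (hH : 0 < H) (hB : B ≤ A * H ^ 2) (h : ∀ x ∈ Icc 0 H, x * y ≤ B + A * x ^ 2) :
    y ≤ 2 * √(A * B) := by
  -- `hB` rules out `y > 2AH`, so the minimiser `y / (2A)` of `B + A x² - x y` lies in `[0, H]`.
  have hy_le : y ≤ 2 * A * H := by
    by_contra! hy_gt
    nlinarith [h H ⟨hH.le, le_rfl⟩]
  have hopt := h (y / (2 * A)) ⟨by positivity, by rw [div_le_iff₀ (by positivity)]; linarith⟩
  have hsq : y ^ 2 ≤ 4 * (A * B) := by
    field_simp at hopt
    nlinarith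
  nlinarith [sq_sqrt (show 0 ≤ A * B by nlinarith), sqrt_nonneg (A * B)]

theorem rpow_neg_le_two_mul_rpow_neg {α x y : ℝ} (hα : 0 < α) (hy : 0 < y)
    (hxy : 2 ^ (-α⁻¹) * y ≤ x) : x ^ (-α) ≤ 2 * y ^ (-α) :=
  calc x ^ (-α) ≤ (2 ^ (-α⁻¹) * y) ^ (-α) :=
        rpow_le_rpow_of_nonpos (by positivity) hxy (by linarith)
    _ = 2 * y ^ (-α) := by
        rw [mul_rpow (by positivity) hy.le, ← rpow_mul (by norm_num), neg_mul_neg,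
          inv_mul_cancel₀ hα.ne', rpow_one]

theorem eventually_mul_rpow_mul_log_rpow_le {c β γ s ε : ℝ} (hc : 0 < c) (hβs : β < s)
    (hε : 0 < ε) : ∀ᶠ x in atTop, c * x ^ β * log x ^ γ ≤ ε * x ^ s := by
  filter_upwards [(isLittleO_log_rpow_rpow_atTop γ (sub_pos.2 hβs)).bound (div_pos hε hc),
    eventually_gt_atTop 1] with x hx hx1
  rw [norm_of_nonneg (rpow_nonneg (log_nonneg hx1.le) _),
    norm_of_nonneg (rpow_nonneg (by linarith) _)] at hx
  calc c * x ^ β * log x ^ γ ≤ c * x ^ β * (ε / c * x ^ (s - β)) :=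
        mul_le_mul_of_nonneg_left hx (by positivity)
    _ = ε * x ^ s := by
        rw [mul_mul_mul_comm, mul_div_cancel₀ _ hc.ne', ← rpow_add (by linarith),
          add_sub_cancel]

theorem sqrt_rpow_eq_rpow_div_two {x : ℝ} (hx : 0 ≤ x) (y : ℝ) :
    √(x ^ y) = x ^ (y / 2) := by
  rw [sqrt_eq_rpow, ← rpow_mul hx, mul_one_div]

theorem sqrt_mul_rpow_neg_mul_mul_rpow_mul_rpow {C₀ C₁ α β γ x y : ℝ} (hC₀ : 0 ≤ C₀)
    (hC₁ : 0 ≤ C₁) (hx : 0 < x) (hy : 0 ≤ y) :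
    √(C₀ * x ^ (-α) * (C₁ * x ^ β * y ^ γ)) =
      √(C₀ * C₁) * x ^ ((β - α) / 2) * y ^ (γ / 2) := by
  rw [show C₀ * x ^ (-α) * (C₁ * x ^ β * y ^ γ) = C₀ * C₁ * (x ^ (β - α) * y ^ γ) by
      rw [sub_eq_add_neg, rpow_add hx]; ring,
    sqrt_mul (mul_nonneg hC₀ hC₁), sqrt_mul (rpow_nonneg hx.le _),
    sqrt_rpow_eq_rpow_div_two hx.le, sqrt_rpow_eq_rpow_div_two hy, mul_assoc]

theorem mul_le_integral_add_of_hasDerivAt_le {f : ℝ → ℝ} {C α t h : ℝ}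
    (hf : AbsolutelyContinuousOnInterval f 0 t) (hf_nonneg : ∀ s ∈ Icc 0 t, 0 ≤ f s)
    (hC : 0 ≤ C) (hα : 0 < α)
    (hf' : ∀ x ∈ Ioo 0 t, ∀ d, HasDerivAt f d x → d ≤ C * (1 + x) ^ (-α))
    (h0 : 0 ≤ h) (hht : h ≤ t) (hh : h ≤ (1 - 2 ^ (-α⁻¹)) * (1 + t)) :
    h * f t ≤ (∫ s in (0 : ℝ)..t, f s) + C * (1 + t) ^ (-α) * h ^ 2 := by
  have hcoef :
      ∀ x ∈ Ioo (t - h) t, ∀ d, HasDerivAt f d x → d ≤ 2 * (C * (1 + t) ^ (-α)) :=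
    fun x hx d hd => calc d ≤ C * (1 + x) ^ (-α) := hf' x ⟨by linarith [hx.1], hx.2⟩ d hd
      _ ≤ C * (2 * (1 + t) ^ (-α)) := mul_le_mul_of_nonneg_left
          (rpow_neg_le_two_mul_rpow_neg hα (by linarith) (by linarith [hx.1])) hC
      _ = 2 * (C * (1 + t) ^ (-α)) := by ring
  have hsub : uIcc (t - h) t ⊆ uIcc 0 t := uIcc_subset_uIcc
    (by simp [uIcc_of_le (h0.trans hht), hht, h0]) (by simp)
  have hlocal := (hf.mono hsub).mul_sub_le_integral_of_hasDerivAt_le (by linarith)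
    (mul_nonneg zero_le_two (mul_nonneg hC (rpow_nonneg (by linarith) _))) hcoef
  have hmono : ∫ s in (t - h)..t, f s ≤ ∫ s in (0 : ℝ)..t, f s :=
    intervalIntegral.integral_mono_interval (by linarith) (by linarith) le_rfl
      ((ae_restrict_mem measurableSet_Ioc).mono fun x hx =>
        hf_nonneg x (Ioc_subset_Icc_self hx))
      hf.continuousOn.intervalIntegrable
  rw [sub_sub_cancel] at hlocal
  linarith

theorem area_inequality_general
    (f : ℝ → ℝ) (K : NNReal) (C₀ C₁ α β γ : ℝ)
    (hf_lip : LipschitzOnWith K f (Set.Ici 0))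
    (hf_nonneg : ∀ t : ℝ, 0 ≤ t → 0 ≤ f t)
    (hC₀ : 0 < C₀) (hC₁ : 0 < C₁)
    (hβ : 0 ≤ β) (hβα : β < α) (hαβ : α + β < 2)
    (hderiv : ∀ t : ℝ, 0 ≤ t → ∀ d : ℝ, HasDerivAt f d t → d ≤ C₀ * (1 + t) ^ (-α))
    (hint : ∀ t : ℝ, 0 ≤ t →
      (∫ s in (0:ℝ)..t, f s) ≤ C₁ * (1 + t) ^ β * (Real.log (1 + t)) ^ γ) :
    ∃ T : ℝ, ∀ t ≥ T,
      f t ≤ 2 * Real.sqrt (C₀ * C₁) * (1 + t) ^ ((β - α) / 2) *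
        (Real.log (1 + t)) ^ (γ / 2) := by
  have hα : 0 < α := hβ.trans_lt hβα
  set θ : ℝ := 2 ^ (-α⁻¹)
  have hθ_pos : 0 < θ := by positivity
  have hθ_lt : θ < 1 := rpow_lt_one_of_one_lt_of_neg one_lt_two (by simpa using hα)
  obtain ⟨T, hT⟩ := eventually_atTop.1 <|
    (tendsto_atTop_add_const_left atTop 1 (f := fun x : ℝ => x) tendsto_id).eventually
      ((eventually_mul_rpow_mul_log_rpow_le hC₁ (by linarith : β < 2 - α)
        (by positivity : 0 < C₀ * (1 - θ) ^ 2)).and (eventually_ge_atTop θ⁻¹))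
  refine ⟨T, fun t htT => ?_⟩
  obtain ⟨hsmall, hlarge⟩ := hT t htT
  have hθt : 1 ≤ θ * (1 + t) := by rwa [inv_le_iff_one_le_mul₀' hθ_pos] at hlarge
  have ht : 0 ≤ t := by nlinarith
  set A := C₀ * (1 + t) ^ (-α)
  set B := C₁ * (1 + t) ^ β * log (1 + t) ^ γ
  have hB : B ≤ A * ((1 - θ) * (1 + t)) ^ 2 := by
    rw [show 2 - α = -α + 2 by ring, rpow_add (by linarith), rpow_two] at hsmall
    linarith
  have key : ∀ h ∈ Icc 0 ((1 - θ) * (1 + t)), h * f t ≤ B + A * h ^ 2 := fun h hh => by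
    have hlip : LipschitzOnWith K f (uIcc 0 t) :=
      hf_lip.mono (uIcc_of_le ht ▸ Icc_subset_Ici_self)
    have := mul_le_integral_add_of_hasDerivAt_le hlip.absolutelyContinuousOnInterval
      (fun s hs => hf_nonneg s hs.1) hC₀.le hα (fun x hx => hderiv x hx.1.le) hh.1
      (by linarith [hh.2]) hh.2
    linarith [hint t ht]
  calc f t ≤ 2 * √(A * B) := le_two_mul_sqrt_of_forall_mul_le_add_mul_sq (hf_nonneg t ht)
        (by positivity) (by nlinarith) hB key
    _ = 2 * √(C₀ * C₁) * (1 + t) ^ ((β - α) / 2) * log (1 + t) ^ (γ / 2) := by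
        rw [sqrt_mul_rpow_neg_mul_mul_rpow_mul_rpow hC₀.le hC₁.le (by linarith)
          (log_nonneg (by linarith))]
        ring

/-- Area inequality (Deng–Huang–Su): a nonnegative Lipschitz function with a
one-sided derivative bound `f'(t) ≤ C₀(1+t)^{-α}` and an integrated bound
`∫₀ᵗ f ≤ C₁(1+t)^β ln^γ(1+t)` satisfies
`f(t) ≤ 2√(C₀C₁)(1+t)^{(β-α)/2} ln^{γ/2}(1+t)` for large `t`. -/
theorem area_inequality
    (f : ℝ → ℝ) (K : NNReal) (C₀ C₁ α β γ : ℝ)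
    (hf_lip : LipschitzOnWith K f (Set.Ici 0))
    (hf_nonneg : ∀ t : ℝ, 0 ≤ t → 0 ≤ f t)
    (hC₀ : 0 < C₀) (hC₁ : 0 < C₁)
    (hβ : 0 ≤ β) (hβα : β < α) (hγ : 0 ≤ γ) (hαβ : α + β < 2)
    (hderiv : ∀ t : ℝ, 0 ≤ t → ∀ d : ℝ, HasDerivAt f d t → d ≤ C₀ * (1 + t) ^ (-α))
    (hint : ∀ t : ℝ, 0 ≤ t →
      (∫ s in (0:ℝ)..t, f s) ≤ C₁ * (1 + t) ^ β * (Real.log (1 + t)) ^ γ) :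
    ∃ T : ℝ, ∀ t ≥ T,
      f t ≤ 2 * Real.sqrt (C₀ * C₁) * (1 + t) ^ ((β - α) / 2) *
        (Real.log (1 + t)) ^ (γ / 2) :=
  area_inequality_general f K C₀ C₁ α β γ hf_lip hf_nonneg hC₀ hC₁ hβ hβα hαβ hderiv hint
end

section
/- Let f : [0,∞) → [0,∞) be Lipschitz continuous with f'(t) ≤ C₀(1+t)^{-α} for some C₀ > 0 and 0 < α ≤ 2 (at points of differentiability), and assume f ∈ L¹(0,∞). Then f(t) = o(t^{-α/2}) as t → ∞. -/
/-!
On `[t / 2, t]` the derivative bound reads `f' ≤ L := C₀ (t / 2) ^ (-α)`, and since a Lipschitz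
function is the integral of its a.e. derivative, `f ≥ f t / 2` on the window `[t - δ, t]` with
`δ = min (t / 2) (f t / (2 L))`. With `g t = t ^ (α / 2) * f t` this gives
`∫ u in t / 2..t, f u ≥ δ * f t / 2 ≥ min (g t / 4) (g t ^ 2 / (16 C₀))`.
The left side tends to zero because `f` is integrable, hence so does `g`.
-/

open MeasureTheory Real Filter Asymptotics Topology Set

theorem LipschitzOnWith.sub_le_mul_of_hasDerivAt_le {f : ℝ → ℝ} {K : NNReal} {s t c : ℝ}
    (hf : LipschitzOnWith K f (Icc s t)) (hst : s ≤ t)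
    (hd : ∀ u ∈ Ioo s t, ∀ d, HasDerivAt f d u → d ≤ c) :
    f t - f s ≤ c * (t - s) := by
  have hac : AbsolutelyContinuousOnInterval f s t :=
    (uIcc_of_le hst ▸ hf).absolutelyContinuousOnInterval
  have hderiv_le : ∀ᵐ u ∂volume.restrict (Icc s t), deriv f u ≤ c := by
    rw [← Measure.restrict_congr_set Ioo_ae_eq_Icc]
    filter_upwards [ae_restrict_mem measurableSet_Ioo, ae_restrict_of_ae hac.ae_differentiableAt]
      with u hu hdiff
    exact hd u hu _ (hdiff (uIcc_of_le hst ▸ Ioo_subset_Icc_self hu)).hasDerivAt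
  rw [← hac.integral_deriv_eq_sub]
  calc ∫ u in s..t, deriv f u ≤ ∫ _ in s..t, c :=
        intervalIntegral.integral_mono_ae_restrict hst hac.intervalIntegrable_deriv
          intervalIntegrable_const hderiv_le
    _ = c * (t - s) := by simp [mul_comm]

theorem tendsto_intervalIntegral_zero_of_integrableOn_Ioi {E : Type*} [NormedAddCommGroup E]
    [NormedSpace ℝ E] [CompleteSpace E] {f : ℝ → E} {a : ℝ} (hf : IntegrableOn f (Ioi a))
    {ι : Type*} {l : Filter ι} [l.IsCountablyGenerated] {u v : ι → ℝ}
    (hu : Tendsto u l atTop) (hv : Tendsto v l atTop) :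
    Tendsto (fun i => ∫ x in u i..v i, f x) l (𝓝 0) := by
  have hII : ∀ b, a ≤ b → IntervalIntegrable f volume a b := fun b hb =>
    (intervalIntegrable_iff_integrableOn_Ioc_of_le hb).2 (hf.mono_set Ioc_subset_Ioi_self)
  have hlim := (intervalIntegral_tendsto_integral_Ioi a hf hv).sub
    (intervalIntegral_tendsto_integral_Ioi a hf hu)
  rw [sub_self] at hlim
  refine hlim.congr' ?_
  filter_upwards [hu.eventually_ge_atTop a, hv.eventually_ge_atTop a] with i hui hvi
  exact intervalIntegral.integral_interval_sub_left (hII _ hvi) (hII _ hui)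

theorem tendsto_nhds_zero_of_min_mul_le {ι : Type*} {l : Filter ι} {g φ : ι → ℝ} {a b : ℝ}
    (ha : 0 < a) (hb : 0 < b) (hg : ∀ᶠ i in l, 0 ≤ g i) (hφ : Tendsto φ l (𝓝 0))
    (h : ∀ᶠ i in l, min (a * g i) (b * g i ^ 2) ≤ φ i) : Tendsto g l (𝓝 0) := by
  refine tendsto_order.2 ⟨fun e he => hg.mono fun i hi => he.trans_le hi, fun ε hε => ?_⟩
  have hmin : 0 < min (a * ε) (b * ε ^ 2) := lt_min (mul_pos ha hε) (mul_pos hb (pow_pos hε 2))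
  filter_upwards [hg, h, hφ.eventually_lt_const hmin] with i hgi hi hφi
  by_contra! hεg
  have := min_le_min (mul_le_mul_of_nonneg_left hεg ha.le)
    (mul_le_mul_of_nonneg_left (pow_le_pow_left₀ hε.le hεg 2) hb.le)
  linarith

theorem half_mul_min_le_integral_of_sub_le {f : ℝ → ℝ} {a b L : ℝ} (hL : 0 < L)
    (hab : a ≤ b) (hf : IntervalIntegrable f volume a b)
    (hf_nonneg : ∀ s ∈ Icc a b, 0 ≤ f s)
    (hslope : ∀ s ∈ Icc a b, f b - f s ≤ L * (b - s)) :
    min (b - a) (f b / (2 * L)) * (f b / 2) ≤ ∫ s in a..b, f s := by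
  set δ := min (b - a) (f b / (2 * L))
  have hfb : 0 ≤ f b := hf_nonneg b (right_mem_Icc.2 hab)
  have hδ₀ : 0 ≤ δ := le_min (sub_nonneg.2 hab) (by positivity)
  have hδ : δ ≤ b - a := min_le_left _ _
  have hLδ : L * δ ≤ f b / 2 := by
    have := (le_div_iff₀' (by positivity)).1 (min_le_right (b - a) (f b / (2 * L)))
    linarith
  have hlow : ∀ s ∈ Icc (b - δ) b, f b / 2 ≤ f s := fun s hs => by
    have := hslope s ⟨by linarith [hs.1], hs.2⟩
    nlinarith [hs.1]
  calc δ * (f b / 2) = ∫ _ in b - δ..b, f b / 2 := by simp [mul_div_assoc]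
    _ ≤ ∫ s in b - δ..b, f s :=
      intervalIntegral.integral_mono_on (by linarith) intervalIntegrable_const
        (hf.mono_set (uIcc_subset_uIcc_right (mem_uIcc_of_le (by linarith) (by linarith)))) hlow
    _ ≤ ∫ s in a..b, f s :=
      intervalIntegral.integral_mono_interval (by linarith) (by linarith) le_rfl
        (ae_restrict_of_forall_mem measurableSet_Ioc fun s hs =>
          hf_nonneg s (Ioc_subset_Icc_self hs)) hf

theorem half_rpow_neg_le {t α : ℝ} (ht : 0 ≤ t) (hα : α ≤ 2) :
    (t / 2) ^ (-α) ≤ 4 * t ^ (-α) := by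
  have h2 : (1 / 4 : ℝ) ≤ 2 ^ (-α) := by
    calc (1 / 4 : ℝ) = 2 ^ (-2 : ℝ) := by norm_num
      _ ≤ 2 ^ (-α) := rpow_le_rpow_of_exponent_le one_le_two (by linarith)
  rw [div_rpow ht zero_le_two, div_le_iff₀ (by positivity)]
  nlinarith [rpow_nonneg ht (-α)]

theorem min_rpow_mul_le_integral_half {f : ℝ → ℝ} {K : NNReal} {C₀ α t : ℝ}
    (hf_lip : LipschitzOnWith K f (Ici 0)) (hf_nonneg : ∀ s, 0 ≤ s → 0 ≤ f s)
    (hC₀ : 0 < C₀) (hα₁ : 0 ≤ α) (hα₂ : α ≤ 2)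
    (hderiv : ∀ s, 0 ≤ s → ∀ d, HasDerivAt f d s → d ≤ C₀ * (1 + s) ^ (-α))
    (ht : 1 ≤ t) :
    min (1 / 4 * (t ^ (α / 2) * f t)) (1 / (16 * C₀) * (t ^ (α / 2) * f t) ^ 2) ≤
      ∫ u in t / 2..t, f u := by
  have ht₀ : 0 < t := by linarith
  set L := C₀ * (t / 2) ^ (-α)
  have hL : 0 < L := by positivity
  have hsub : Icc (t / 2) t ⊆ Ici 0 := fun s hs => mem_Ici.2 (by linarith [hs.1])
  have hslope : ∀ s ∈ Icc (t / 2) t, f t - f s ≤ L * (t - s) := by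
    intro s hs
    refine (hf_lip.mono ((Icc_subset_Icc_left hs.1).trans hsub)).sub_le_mul_of_hasDerivAt_le hs.2
      fun u hu d hd => (hderiv u (by linarith [hu.1, hs.1]) d hd).trans ?_
    have hu : t / 2 ≤ 1 + u := by linarith [hu.1, hs.1]
    exact mul_le_mul_of_nonneg_left
      (rpow_le_rpow_of_nonpos (by positivity) hu (by linarith)) hC₀.le
  have hint : IntervalIntegrable f volume (t / 2) t :=
    (hf_lip.continuousOn.mono (uIcc_of_le (by linarith : t / 2 ≤ t) ▸ hsub)).intervalIntegrable
  refine le_trans ?_ (half_mul_min_le_integral_of_sub_le hL (by linarith) hint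
    (fun s hs => hf_nonneg s (by linarith [hs.1])) hslope)
  have hft := hf_nonneg t ht₀.le
  rw [min_mul_of_nonneg _ _ (by positivity)]
  refine min_le_min ?_ ?_
  · have : t ^ (α / 2) ≤ t := by
      simpa using rpow_le_rpow_of_exponent_le ht (show α / 2 ≤ 1 by linarith)
    nlinarith
  · have hpow : (t ^ (α / 2)) ^ 2 * t ^ (-α) = 1 := by
      rw [← rpow_natCast, ← rpow_mul ht₀.le, ← rpow_add ht₀]; norm_num
    have hL4 : L ≤ 4 * C₀ * t ^ (-α) := by
      have := mul_le_mul_of_nonneg_left (half_rpow_neg_le ht₀.le hα₂) hC₀.le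
      linarith
    rw [div_mul_div_comm, le_div_iff₀ (by positivity)]
    calc 1 / (16 * C₀) * (t ^ (α / 2) * f t) ^ 2 * (2 * L * 2)
        = (t ^ (α / 2)) ^ 2 * f t ^ 2 * (L / (4 * C₀)) := by field_simp; ring
      _ ≤ (t ^ (α / 2)) ^ 2 * f t ^ 2 * t ^ (-α) := by
        gcongr
        rw [div_le_iff₀ (by positivity)]
        linarith
      _ = f t * f t := by rw [mul_right_comm, hpow]; ring

/-- Area inequality, second part: a nonnegative Lipschitz integrable function
with derivative bound `f'(t) ≤ C₀(1+t)^{-α}`, `0 < α ≤ 2`, satisfies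
`f(t) = o(t^{-α/2})` as `t → ∞`. -/
theorem area_inequality_littleO
    (f : ℝ → ℝ) (K : NNReal) (C₀ α : ℝ)
    (hf_lip : LipschitzOnWith K f (Set.Ici 0))
    (hf_nonneg : ∀ t : ℝ, 0 ≤ t → 0 ≤ f t)
    (hC₀ : 0 < C₀) (hα₁ : 0 < α) (hα₂ : α ≤ 2)
    (hderiv : ∀ t : ℝ, 0 ≤ t → ∀ d : ℝ, HasDerivAt f d t → d ≤ C₀ * (1 + t) ^ (-α))
    (hint : IntegrableOn f (Set.Ioi 0)) :
    (fun t : ℝ => f t) =o[atTop] fun t : ℝ => t ^ (-α / 2) := by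
  have hweighted : Tendsto (fun t => t ^ (α / 2) * f t) atTop (𝓝 0) :=
    tendsto_nhds_zero_of_min_mul_le (by norm_num) (by positivity)
      ((eventually_ge_atTop 0).mono fun t ht => mul_nonneg (rpow_nonneg ht _) (hf_nonneg t ht))
      (tendsto_intervalIntegral_zero_of_integrableOn_Ioi hint
        (tendsto_id.atTop_div_const two_pos) tendsto_id)
      ((eventually_ge_atTop 1).mono fun t ht =>
        min_rpow_mul_le_integral_half hf_lip hf_nonneg hC₀ hα₁.le hα₂ hderiv ht)
  refine (isLittleO_iff_tendsto' ?_).2 (hweighted.congr' ?_)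
  · filter_upwards [eventually_gt_atTop 0] with t ht h
    exact absurd h (rpow_pos_of_pos ht _).ne'
  · filter_upwards [eventually_gt_atTop 0] with t ht
    rw [neg_div, rpow_neg ht.le, div_inv_eq_mul, mul_comm]
end
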